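/- arXiv:2305.15925 — 7 statements merged into one kernel-verified Lean document; each statement's English description precedes it below -/
import Mathlib

section
/- If a family of probability density functions indexed by a set A contains linearly independent functions under finite mixtures (i.e., every finite subfamily is linearly independent), then the corresponding finite mixture family is identifiable up to permutations: whenever two finite mixtures with distinct components each and summing weights 1 are equal as functions, they have the same number of components and there is a bijection matching components with equal weights and equal density functions. -/
/-!
Linear independence of every finite subfamily makes the whole family `f` linearly independent,
so two equal mixtures have equal weight functions `A →₀ ℝ` (the pushforwards of `c` along `a`
and of `c'` along `b`). Since all weights are positive, the support of that common weight
function is both `range a` and `range b`, and matching the two parametrisations of it gives the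
permutation.
-/

open Finsupp in
theorem LinearIndependent.mapDomain_eq_of_sum_smul_eq {R M A ι κ : Type*} [Semiring R]
    [AddCommMonoid M] [Module R M] [Fintype ι] [Fintype κ] {v : A → M}
    (hv : LinearIndependent R v) {a : ι → A} {b : κ → A} {c : ι → R} {c' : κ → R}
    (h : ∑ i, c i • v (a i) = ∑ j, c' j • v (b j)) :
    (equivFunOnFinite.symm c).mapDomain a = (equivFunOnFinite.symm c').mapDomain b := by
  apply hv.finsuppLinearCombination_injective
  rw [linearCombination_mapDomain, linearCombination_mapDomain, linearCombination_apply,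
    linearCombination_apply, sum_fintype _ _ (by simp), sum_fintype _ _ (by simp)]
  simpa using h

namespace Finsupp

variable {ι κ A M : Type*} [Finite ι] [Finite κ] [AddCommMonoid M] {a : ι → A} {b : κ → A}
  {c : ι → M} {c' : κ → M}

theorem range_subset_of_mapDomain_eq (ha : a.Injective) (hc : ∀ i, c i ≠ 0)
    (h : (equivFunOnFinite.symm c).mapDomain a = (equivFunOnFinite.symm c').mapDomain b) :
    Set.range a ⊆ Set.range b := by
  rintro _ ⟨i, rfl⟩
  by_contra hi
  apply hc i
  rw [← mapDomain_of_notMem_range (equivFunOnFinite.symm c') _ hi, ← h, mapDomain_apply ha]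
  rfl

theorem exists_equiv_of_mapDomain_eq (ha : a.Injective) (hb : b.Injective)
    (hc : ∀ i, c i ≠ 0) (hc' : ∀ j, c' j ≠ 0)
    (h : (equivFunOnFinite.symm c).mapDomain a = (equivFunOnFinite.symm c').mapDomain b) :
    ∃ e : ι ≃ κ, ∀ i, c i = c' (e i) ∧ a i = b (e i) := by
  have hrange : Set.range a = Set.range b :=
    (range_subset_of_mapDomain_eq ha hc h).antisymm (range_subset_of_mapDomain_eq hb hc' h.symm)
  let e := (Equiv.ofInjective a ha).trans <|
    (Equiv.setCongr hrange).trans (Equiv.ofInjective b hb).symm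
  have hbe : ∀ i, b (e i) = a i := fun i => Equiv.apply_ofInjective_symm hb _
  refine ⟨e, fun i => ⟨?_, (hbe i).symm⟩⟩
  calc c i = (equivFunOnFinite.symm c).mapDomain a (a i) :=
        (mapDomain_apply ha (equivFunOnFinite.symm c) i).symm
    _ = (equivFunOnFinite.symm c').mapDomain b (b (e i)) := by rw [h, hbe]
    _ = c' (e i) := mapDomain_apply hb (equivFunOnFinite.symm c') (e i)

end Finsupp

theorem finite_mixture_identifiable_up_to_permutation_general
    {d : ℕ} {A : Type*} (f : A → (Fin d → ℝ) → ℝ)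
    (hLI : ∀ S : Finset A, LinearIndependent ℝ (fun a : S => f a.1))
    {N M : ℕ} (a : Fin N → A) (b : Fin M → A)
    (ha : Function.Injective a) (hb : Function.Injective b)
    (c : Fin N → ℝ) (c' : Fin M → ℝ)
    (hc : ∀ i, 0 < c i) (hc' : ∀ j, 0 < c' j)
    (heq : ∀ x, ∑ i, c i * f (a i) x = ∑ j, c' j * f (b j) x) :
    N = M ∧ ∃ e : Fin N ≃ Fin M, ∀ i, c i = c' (e i) ∧ f (a i) = f (b (e i)) := by
  have hf : LinearIndependent ℝ f := linearIndependent_iff_finset_linearIndependent.2 hLI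
  have hmix : ∑ i, c i • f (a i) = ∑ j, c' j • f (b j) := by
    funext x
    simpa only [Finset.sum_apply, Pi.smul_apply, smul_eq_mul] using heq x
  obtain ⟨e, he⟩ := Finsupp.exists_equiv_of_mapDomain_eq ha hb (fun i => (hc i).ne')
    (fun j => (hc' j).ne') (hf.mapDomain_eq_of_sum_smul_eq hmix)
  exact ⟨by simpa using Fintype.card_congr e, e, fun i => ⟨(he i).1, congrArg f (he i).2⟩⟩

/-- If a family of probability density functions indexed by `A` contains
linearly independent functions under finite mixtures (every finite subfamily is linearly
independent), then the finite mixture family is identifiable up to permutations. -/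
theorem finite_mixture_identifiable_up_to_permutation
    {d : ℕ} {A : Type*} (f : A → (Fin d → ℝ) → ℝ)
    (hmeas : ∀ a, Measurable (f a)) (hnonneg : ∀ a x, 0 ≤ f a x)
    (hLI : ∀ S : Finset A, LinearIndependent ℝ (fun a : S => f a.1))
    {N M : ℕ} (a : Fin N → A) (b : Fin M → A)
    (ha : Function.Injective a) (hb : Function.Injective b)
    (c : Fin N → ℝ) (c' : Fin M → ℝ)
    (hc : ∀ i, 0 < c i) (hc' : ∀ j, 0 < c' j)
    (hsum : ∑ i, c i = 1) (hsum' : ∑ j, c' j = 1)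
    (heq : ∀ x, ∑ i, c i * f (a i) x = ∑ j, c' j * f (b j) x) :
    N = M ∧ ∃ e : Fin N ≃ Fin M, ∀ i, c i = c' (e i) ∧ f (a i) = f (b (e i)) :=
  finite_mixture_identifiable_up_to_permutation_general f hLI a b ha hb c c' hc hc' heq
end

section
/- Multivariate Gaussian densities with pairwise distinct (mean, covariance) parameters are linearly independent: if a finite linear combination sum_{i=1}^n c_i N(x; mu_i, Sigma_i) = 0 for all x in R^m, where the pairs (mu_i, Sigma_i) are pairwise distinct and the Sigma_i are positive definite, then all c_i = 0. -/
open MeasureTheory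

open Filter Matrix MvPolynomial in
private lemma tendsto_exp_quad (p q : ℝ) (h : p < 0 ∨ (p = 0 ∧ q < 0)) :
    Tendsto (fun t => Real.exp (p*t^2 + q*t)) atTop (nhds 0) := by
  have : Tendsto (fun t : ℝ => p*t^2 + q*t) atTop atBot := by
    rcases h with hp | ⟨hp, hq⟩
    · have h1 : Tendsto (fun t : ℝ => p*t + q) atTop atBot := by
        apply Filter.tendsto_atBot_add_const_right
        exact Filter.Tendsto.const_mul_atTop_of_neg hp tendsto_id
      have h2 := Filter.Tendsto.atBot_mul_atTop₀ h1 tendsto_id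
      refine h2.congr' (Filter.Eventually.of_forall fun t => by simp [id]; ring)
    · subst hp
      have := Filter.Tendsto.const_mul_atTop_of_neg hq (tendsto_id (α := ℝ))
      refine this.congr' (Filter.Eventually.of_forall fun t => by simp [id, mul_comm])
  exact Real.tendsto_exp_atBot.comp this

open Filter in
private lemma exp_quad_li {ι : Type*} [DecidableEq ι] (s : Finset ι) :
    ∀ (a b d : ι → ℝ),
      (∀ i ∈ s, ∀ j ∈ s, i ≠ j → (a i, b i) ≠ (a j, b j)) →
      (∀ t : ℝ, ∑ i ∈ s, d i * Real.exp (a i * t^2 + b i * t) = 0) →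
      ∀ i ∈ s, d i = 0 := by
  induction s using Finset.strongInduction with
  | _ s ih =>
    intro a b d hdist hzero i hi
    have hs : s.Nonempty := ⟨i, hi⟩
    have htne : (s.filter (fun j => a j = s.sup' hs a)).Nonempty := by
      obtain ⟨j, hj, hje⟩ := s.exists_mem_eq_sup' hs a
      exact ⟨j, Finset.mem_filter.2 ⟨hj, hje.symm⟩⟩
    obtain ⟨i₀, hi₀t, hi₀max⟩ := Finset.exists_max_image _ b htne
    have hi₀s : i₀ ∈ s := (Finset.mem_filter.1 hi₀t).1
    have hi₀a : a i₀ = s.sup' hs a := (Finset.mem_filter.1 hi₀t).2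
    have hmaxa : ∀ j ∈ s, a j ≤ a i₀ := fun j hj => hi₀a ▸ Finset.le_sup' a hj
    have hmaxb : ∀ j ∈ s, a j = a i₀ → b j ≤ b i₀ := fun j hj hja =>
      hi₀max j (Finset.mem_filter.2 ⟨hj, hja.trans hi₀a⟩)
    set F : ℝ → ℝ := fun t => ∑ j ∈ s.erase i₀,
      d j * Real.exp ((a j - a i₀) * t^2 + (b j - b i₀) * t) with hF
    have hkey : ∀ t, d i₀ + F t = 0 := by
      intro t
      have h0 := hzero t
      have h1 : ∑ j ∈ s, d j * Real.exp ((a j - a i₀) * t^2 + (b j - b i₀) * t) = 0 := by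
        have : ∑ j ∈ s, d j * Real.exp ((a j - a i₀) * t^2 + (b j - b i₀) * t)
            = (∑ j ∈ s, d j * Real.exp (a j * t^2 + b j * t)) * Real.exp (-(a i₀ * t^2 + b i₀ * t)) := by
          rw [Finset.sum_mul]
          refine Finset.sum_congr rfl fun j hj => ?_
          rw [mul_assoc, ← Real.exp_add]
          ring_nf
        rw [this, h0, zero_mul]
      rw [← Finset.add_sum_erase _ _ hi₀s] at h1
      simpa [F] using h1
    have hFlim : Tendsto F atTop (nhds 0) := by
      rw [hF]
      have : (0:ℝ) = ∑ j ∈ s.erase i₀, (0:ℝ) := by simp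
      rw [this]
      refine tendsto_finset_sum _ fun j hj => ?_
      have hjs : j ∈ s := Finset.mem_of_mem_erase hj
      have hjne : j ≠ i₀ := Finset.ne_of_mem_erase hj
      have hcase : (a j - a i₀) < 0 ∨ ((a j - a i₀) = 0 ∧ (b j - b i₀) < 0) := by
        rcases lt_or_eq_of_le (hmaxa j hjs) with h | h
        · left; linarith
        · right
          refine ⟨by linarith, ?_⟩
          have hble := hmaxb j hjs h
          have : b j ≠ b i₀ := fun hb => hdist j hjs i₀ hi₀s hjne (by rw [h, hb])
          cases lt_or_eq_of_le hble with
          | inl h' => linarith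
          | inr h' => exact absurd h' this
      have := (tendsto_exp_quad _ _ hcase).const_mul (d j)
      simpa using this
    have hdi₀ : d i₀ = 0 := by
      have h1 : Tendsto (fun _ : ℝ => d i₀) atTop (nhds (-0)) := by
        have : (fun _ : ℝ => d i₀) = fun t => -F t := by
          funext t; have := hkey t; linarith
        rw [this]; exact hFlim.neg
      simpa using (tendsto_nhds_unique h1 tendsto_const_nhds).symm
    have hzero' : ∀ t : ℝ, ∑ j ∈ s.erase i₀, d j * Real.exp (a j * t^2 + b j * t) = 0 := by
      intro t
      have := hzero t
      rw [← Finset.add_sum_erase _ _ hi₀s, hdi₀, zero_mul, zero_add] at this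
      exact this
    have ihapp := ih (s.erase i₀) (Finset.erase_ssubset hi₀s) a b d
      (fun x hx y hy hxy => hdist x (Finset.mem_of_mem_erase hx) y (Finset.mem_of_mem_erase hy) hxy)
      hzero'
    rcases eq_or_ne i i₀ with rfl | hne
    · exact hdi₀
    · exact ihapp i (Finset.mem_erase.2 ⟨hne, hi⟩)

open Matrix MvPolynomial

private noncomputable def Qpoly {m : ℕ} (B : Matrix (Fin m) (Fin m) ℝ) : MvPolynomial (Fin m) ℝ :=
  ∑ k, ∑ l, MvPolynomial.C (B k l) * MvPolynomial.X k * MvPolynomial.X l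
private noncomputable def Lpoly {m : ℕ} (w : Fin m → ℝ) : MvPolynomial (Fin m) ℝ :=
  ∑ k, MvPolynomial.C (w k) * MvPolynomial.X k

private lemma eval_Qpoly {m : ℕ} (B : Matrix (Fin m) (Fin m) ℝ) (v : Fin m → ℝ) :
    MvPolynomial.eval v (Qpoly B) = v ⬝ᵥ B.mulVec v := by
  simp only [Qpoly, map_sum, _root_.map_mul, eval_C, eval_X, dotProduct, Matrix.mulVec,
    Finset.mul_sum]
  exact Finset.sum_congr rfl fun k _ => Finset.sum_congr rfl fun l _ => by ring

private lemma eval_Lpoly {m : ℕ} (w : Fin m → ℝ) (v : Fin m → ℝ) :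
    MvPolynomial.eval v (Lpoly w) = w ⬝ᵥ v := by
  simp [Lpoly, dotProduct]

private lemma polarization {m : ℕ} (B : Matrix (Fin m) (Fin m) ℝ) (hB : B.IsSymm)
    (h : ∀ v : Fin m → ℝ, dotProduct v (B.mulVec v) = 0) : B = 0 := by
  ext k l
  have he : ∀ k l : Fin m,
      dotProduct (Pi.single k 1 : Fin m → ℝ) (B.mulVec (Pi.single l 1)) = B k l := by
    intro k l; simp [Matrix.mulVec_single, single_dotProduct]
  have h1 := h (Pi.single k 1 + Pi.single l 1)
  rw [Matrix.mulVec_add, add_dotProduct, dotProduct_add, dotProduct_add,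
    he, he, he, he] at h1
  have hkk := h (Pi.single k 1); rw [he] at hkk
  have hll := h (Pi.single l 1); rw [he] at hll
  have hsym : B l k = B k l := by
    have := congr_fun (congr_fun hB k) l
    simpa [Matrix.transpose_apply] using this
  simp only [Matrix.zero_apply]
  linarith

private lemma exists_good_v {m n : ℕ} (μ : Fin n → (Fin m → ℝ)) (S : Fin n → Matrix (Fin m) (Fin m) ℝ)
    (hpd : ∀ i, (S i).PosDef)
    (hdist : ∀ i j, i ≠ j → (μ i, S i) ≠ (μ j, S j)) :
    ∃ v : Fin m → ℝ, ∀ i j, i ≠ j →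
      (v ⬝ᵥ (S i)⁻¹.mulVec v, v ⬝ᵥ (S i)⁻¹.mulVec (μ i)) ≠
      (v ⬝ᵥ (S j)⁻¹.mulVec v, v ⬝ᵥ (S j)⁻¹.mulVec (μ j)) := by
  classical
  set A : Fin n → Matrix (Fin m) (Fin m) ℝ := fun i => (S i)⁻¹ with hA
  have hAsymm : ∀ i, (A i)ᵀ = A i := by
    intro i
    have := (hpd i).inv.isHermitian
    simpa [Matrix.IsHermitian, hA] using this
  set P : Fin n × Fin n → MvPolynomial (Fin m) ℝ := fun p =>
    (Qpoly (A p.1 - A p.2))^2 +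
      (Lpoly ((A p.1).mulVec (μ p.1) - (A p.2).mulVec (μ p.2)))^2 with hP
  have hPne : ∀ p ∈ (Finset.univ : Finset (Fin n)).offDiag, P p ≠ 0 := by
    rintro ⟨i, j⟩ hp hP0
    have hij : i ≠ j := (Finset.mem_offDiag.1 hp).2.2
    have heval : ∀ v : Fin m → ℝ,
        (v ⬝ᵥ (A i - A j).mulVec v) = 0 ∧
        (((A i).mulVec (μ i) - (A j).mulVec (μ j)) ⬝ᵥ v) = 0 := by
      intro v
      have := congrArg (MvPolynomial.eval v) hP0
      simp only [hP, map_add, map_pow, eval_Qpoly, eval_Lpoly, map_zero] at this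
      constructor
      · nlinarith [sq_nonneg (v ⬝ᵥ (A i - A j).mulVec v),
          sq_nonneg (((A i).mulVec (μ i) - (A j).mulVec (μ j)) ⬝ᵥ v)]
      · nlinarith [sq_nonneg (v ⬝ᵥ (A i - A j).mulVec v),
          sq_nonneg (((A i).mulVec (μ i) - (A j).mulVec (μ j)) ⬝ᵥ v)]
    have hBzero : A i - A j = 0 := by
      apply polarization _ _ (fun v => (heval v).1)
      show (A i - A j)ᵀ = A i - A j
      rw [Matrix.transpose_sub, hAsymm, hAsymm]
    have hwzero : (A i).mulVec (μ i) - (A j).mulVec (μ j) = 0 := by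
      by_contra hw
      set w := (A i).mulVec (μ i) - (A j).mulVec (μ j)
      have := (heval w).2
      rw [dotProduct_self_eq_zero] at this
      exact hw this
    have hAeq : A i = A j := by rwa [sub_eq_zero] at hBzero
    have hSeq : S i = S j := by
      have := congrArg (·⁻¹) hAeq
      simpa [hA, Matrix.nonsing_inv_nonsing_inv _ (isUnit_iff_ne_zero.2 (ne_of_gt (hpd i).det_pos)),
        Matrix.nonsing_inv_nonsing_inv _ (isUnit_iff_ne_zero.2 (ne_of_gt (hpd j).det_pos))] using this
    have hμeq : μ i = μ j := by
      have h1 : (A i).mulVec (μ i - μ j) = 0 := by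
        rw [Matrix.mulVec_sub]
        rw [hwzero.symm]
        rw [hAeq]
      have h2 : μ i - μ j = 0 := by
        by_contra hne
        have := congrArg ((S i).mulVec) h1
        rw [Matrix.mulVec_mulVec] at this
        rw [show (S i) * (A i) = 1 from Matrix.mul_nonsing_inv _ (isUnit_iff_ne_zero.2 (ne_of_gt (hpd i).det_pos))] at this
        rw [Matrix.one_mulVec, Matrix.mulVec_zero] at this
        exact hne this
      rwa [sub_eq_zero] at h2
    exact hdist i j hij (by rw [hμeq, hSeq])
  have hFne : (∏ p ∈ (Finset.univ : Finset (Fin n)).offDiag, P p) ≠ 0 :=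
    Finset.prod_ne_zero_iff.2 hPne
  obtain ⟨v, hv⟩ : ∃ v : Fin m → ℝ,
      MvPolynomial.eval v (∏ p ∈ (Finset.univ : Finset (Fin n)).offDiag, P p) ≠ 0 := by
    by_contra h
    push_neg at h
    exact hFne (MvPolynomial.funext fun x => by simpa using h x)
  refine ⟨v, fun i j hij hc => ?_⟩
  have hmem : (i, j) ∈ (Finset.univ : Finset (Fin n)).offDiag :=
    Finset.mem_offDiag.2 ⟨Finset.mem_univ _, Finset.mem_univ _, hij⟩
  rw [map_prod] at hv
  have hvp : MvPolynomial.eval v (P (i, j)) ≠ 0 :=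
    fun h0 => hv (Finset.prod_eq_zero hmem h0)
  apply hvp
  have h1 : v ⬝ᵥ (A i).mulVec v = v ⬝ᵥ (A j).mulVec v := congrArg Prod.fst hc
  have h2 : v ⬝ᵥ (A i).mulVec (μ i) = v ⬝ᵥ (A j).mulVec (μ j) := congrArg Prod.snd hc
  simp only [hP, map_add, map_pow, eval_Qpoly, eval_Lpoly]
  have e1 : v ⬝ᵥ (A i - A j).mulVec v = 0 := by
    rw [Matrix.sub_mulVec, dotProduct_sub, h1, sub_self]
  have e2 : ((A i).mulVec (μ i) - (A j).mulVec (μ j)) ⬝ᵥ v = 0 := by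
    rw [sub_dotProduct, dotProduct_comm, dotProduct_comm ((A j).mulVec (μ j)), h2, sub_self]
  rw [e1, e2]; ring

/-- Density of the multivariate normal distribution on `ℝ^m` with mean `μ` and
(positive definite) covariance matrix `S`. -/
noncomputable def gaussianPDF {m : ℕ} (μ : Fin m → ℝ) (S : Matrix (Fin m) (Fin m) ℝ)
    (x : Fin m → ℝ) : ℝ :=
  (Real.sqrt ((2 * Real.pi) ^ m * S.det))⁻¹ *
    Real.exp (-(1 / 2) * dotProduct (x - μ) (S⁻¹.mulVec (x - μ)))

/-- multivariate Gaussian densities with pairwise distinct (mean, covariance)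
parameters (covariances positive definite) are linearly independent. -/
theorem gaussian_densities_linearIndependent
    {m n : ℕ} (μ : Fin n → (Fin m → ℝ)) (S : Fin n → Matrix (Fin m) (Fin m) ℝ)
    (hpd : ∀ i, (S i).PosDef)
    (hdist : ∀ i j, i ≠ j → (μ i, S i) ≠ (μ j, S j))
    (c : Fin n → ℝ)
    (hzero : ∀ x, ∑ i, c i * gaussianPDF (μ i) (S i) x = 0) :
    ∀ i, c i = 0 := by
  classical
  obtain ⟨v, hv⟩ := exists_good_v μ S hpd hdist
  set A : Fin n → Matrix (Fin m) (Fin m) ℝ := fun i => (S i)⁻¹ with hA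
  have hAsymm : ∀ i, (A i)ᵀ = A i := by
    intro i
    have := (hpd i).inv.isHermitian
    simpa [Matrix.IsHermitian, hA] using this
  have hsym : ∀ i (u w : Fin m → ℝ), u ⬝ᵥ (A i).mulVec w = w ⬝ᵥ (A i).mulVec u := by
    intro i u w
    rw [Matrix.dotProduct_mulVec, ← Matrix.mulVec_transpose, hAsymm, dotProduct_comm]
  set a : Fin n → ℝ := fun i => -(1/2) * (v ⬝ᵥ (A i).mulVec v) with ha
  set b : Fin n → ℝ := fun i => v ⬝ᵥ (A i).mulVec (μ i) with hb
  set K : Fin n → ℝ := fun i => (Real.sqrt ((2*Real.pi)^m * (S i).det))⁻¹ *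
      Real.exp (-(1/2) * ((μ i) ⬝ᵥ (A i).mulVec (μ i))) with hK
  have hKpos : ∀ i, 0 < K i := by
    intro i
    apply mul_pos _ (Real.exp_pos _)
    rw [inv_pos]
    apply Real.sqrt_pos.2
    exact mul_pos (pow_pos (by positivity) m) (hpd i).det_pos
  have hgauss : ∀ i (t : ℝ), gaussianPDF (μ i) (S i) (t • v) =
      Real.exp (a i * t^2 + b i * t) * K i := by
    intro i t
    have hE : (t • v - μ i) ⬝ᵥ (A i).mulVec (t • v - μ i)
        = t^2 * (v ⬝ᵥ (A i).mulVec v) - 2*t*(v ⬝ᵥ (A i).mulVec (μ i))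
          + (μ i ⬝ᵥ (A i).mulVec (μ i)) := by
      rw [Matrix.mulVec_sub, dotProduct_sub, sub_dotProduct, sub_dotProduct,
        Matrix.mulVec_smul, smul_dotProduct, smul_dotProduct, dotProduct_smul,
        dotProduct_smul, hsym i (μ i) v]
      simp only [smul_eq_mul]
      ring
    rw [gaussianPDF, hK, hA] at *
    rw [hE]
    rw [show -(1/2) * (t^2 * (v ⬝ᵥ (A i).mulVec v) - 2*t*(v ⬝ᵥ (A i).mulVec (μ i))
          + (μ i ⬝ᵥ (A i).mulVec (μ i)))
        = (a i * t^2 + b i * t) + (-(1/2) * (μ i ⬝ᵥ (A i).mulVec (μ i))) by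
      simp only [ha, hb]; ring]
    rw [Real.exp_add]
    ring
  have hzero' : ∀ t : ℝ, ∑ i, (c i * K i) * Real.exp (a i * t^2 + b i * t) = 0 := by
    intro t
    rw [← hzero (t • v)]
    refine Finset.sum_congr rfl fun i _ => ?_
    rw [hgauss i t]; ring
  have hdist' : ∀ i ∈ Finset.univ, ∀ j ∈ (Finset.univ : Finset (Fin n)), i ≠ j →
      (a i, b i) ≠ (a j, b j) := by
    intro i _ j _ hij hc
    apply hv i j hij
    have h1 : a i = a j := congrArg Prod.fst hc
    have h2 : b i = b j := congrArg Prod.snd hc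
    simp only [ha] at h1
    simp only [hb] at h2
    have h1' : v ⬝ᵥ (A i).mulVec v = v ⬝ᵥ (A j).mulVec v := by linarith
    exact Prod.ext h1' h2
  have hall := exp_quad_li Finset.univ a b (fun i => c i * K i) hdist' hzero'
  intro i
  have hci := hall i (Finset.mem_univ i)
  exact (mul_eq_zero.1 hci).resolve_right (ne_of_gt (hKpos i))
end

section
/- The zero set of a nonzero real analytic function on R^m has Lebesgue measure zero: if f : R^m -> R is real analytic and not identically zero, then {x in R^m : f(x) = 0} has m-dimensional Lebesgue measure zero. -/
open MeasureTheory

/-- Zeros of a nonzero analytic function on `ℝ` form a countable set. -/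
lemma countable_zero_set_analytic_1d (h : ℝ → ℝ)
    (hh : AnalyticOnNhd ℝ h Set.univ) (hne : ∃ a, h a ≠ 0) :
    Set.Countable {t : ℝ | h t = 0} := by
  obtain ⟨a, ha⟩ := hne
  set Z : Set ℝ := {t : ℝ | h t = 0} with hZ
  have key : ∀ t ∈ Z, ∃ s : Set ℝ, s ∈ nhds t ∧ ∀ z ∈ s, z ≠ t → h z ≠ 0 := by
    intro t ht
    rcases (hh t (Set.mem_univ t)).eventually_eq_zero_or_eventually_ne_zero with h0 | h1
    · exfalso
      have hfreq : ∃ᶠ z in nhdsWithin t {t}ᶜ, h z = 0 :=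
        (h0.filter_mono nhdsWithin_le_nhds).frequently
      have := hh.eqOn_zero_of_preconnected_of_frequently_eq_zero
        isPreconnected_univ (Set.mem_univ t) hfreq (Set.mem_univ a)
      exact ha this
    · rw [eventually_nhdsWithin_iff] at h1
      obtain ⟨s, hs, hs'⟩ := h1.exists_mem
      exact ⟨s, hs, fun z hz hzt => hs' z hz hzt⟩
  classical
  choose! g hg1 hg2 using key
  obtain ⟨t, hts, htc, hcov⟩ := TopologicalSpace.countable_cover_nhdsWithin
    (s := Z) (f := g) (fun x hx => mem_nhdsWithin_of_mem_nhds (hg1 x hx))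
  refine htc.mono ?_
  intro z hz
  obtain ⟨x, hx, hzx⟩ := Set.mem_iUnion₂.1 (hcov hz)
  have hzx' : z = x := by
    by_contra hne'
    exact hg2 x (hts hx) z hzx hne' hz
  exact hzx' ▸ hx

/-- The map `t ↦ f (Fin.cons t y)` is analytic on `ℝ` if `f` is. -/
lemma analytic_slice_left {m : ℕ} (f : (Fin (m + 1) → ℝ) → ℝ)
    (hf : AnalyticOnNhd ℝ f Set.univ) (y : Fin m → ℝ) :
    AnalyticOnNhd ℝ (fun t : ℝ => f (Fin.cons t y)) Set.univ := by
  intro t _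
  have hcons : AnalyticAt ℝ (fun s : ℝ => (Fin.cons s y : Fin (m + 1) → ℝ)) t := by
    rw [analyticAt_pi_iff]
    intro i
    refine Fin.cases ?_ (fun j => ?_) i
    · simpa using (show AnalyticAt ℝ (fun s : ℝ => s) t from analyticAt_id)
    · simpa using analyticAt_const (v := y j)
  exact (hf _ (Set.mem_univ _)).comp hcons

/-- The map `y ↦ f (Fin.cons t y)` is analytic on `ℝ^m` if `f` is. -/
lemma analytic_slice_right {m : ℕ} (f : (Fin (m + 1) → ℝ) → ℝ)
    (hf : AnalyticOnNhd ℝ f Set.univ) (t : ℝ) :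
    AnalyticOnNhd ℝ (fun y : Fin m → ℝ => f (Fin.cons t y)) Set.univ := by
  intro y _
  have hcons : AnalyticAt ℝ (fun z : Fin m → ℝ => (Fin.cons t z : Fin (m + 1) → ℝ)) y := by
    rw [analyticAt_pi_iff]
    intro i
    refine Fin.cases ?_ (fun j => ?_) i
    · simpa using analyticAt_const (v := t)
    · simpa using
        (show AnalyticAt ℝ (fun z : Fin m → ℝ => z j) y from
          (ContinuousLinearMap.proj j : (Fin m → ℝ) →L[ℝ] ℝ).analyticAt y)
  exact (hf _ (Set.mem_univ _)).comp hcons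

/-- the zero set of a real analytic function on `ℝ^m` that is not identically
zero has Lebesgue measure zero. -/
theorem zero_set_of_analytic_measure_zero
    {m : ℕ} (f : (Fin m → ℝ) → ℝ)
    (hf : AnalyticOnNhd ℝ f Set.univ) (hne : f ≠ 0) :
    volume {x : Fin m → ℝ | f x = 0} = 0 := by
  induction m with
  | zero =>
    obtain ⟨z, hz⟩ := Function.ne_iff.1 hne
    have : {x : Fin 0 → ℝ | f x = 0} = ∅ := by
      ext x
      simp only [Set.mem_setOf_eq, Set.mem_empty_iff_false, iff_false]
      rw [Subsingleton.elim x z]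
      exact hz
    rw [this]; simp
  | succ n ih =>
    obtain ⟨z, hz⟩ := Function.ne_iff.1 hne
    -- continuity of f
    have hfc : Continuous f := by
      rw [← continuousOn_univ]
      exact hf.continuousOn
    set S : Set (Fin (n + 1) → ℝ) := {x | f x = 0} with hS
    have hSm : MeasurableSet S := (isClosed_eq hfc continuous_const).measurableSet
    -- measure-preserving equivalence with ℝ × ℝ^n
    have hmp := (volume_preserving_piFinSuccAbove (fun _ : Fin (n + 1) => ℝ) 0).symm
    have hvol : volume S =
        (volume : Measure (ℝ × (Fin n → ℝ))) ((MeasurableEquiv.piFinSuccAbove (fun _ : Fin (n + 1) => ℝ) 0).symm ⁻¹' S) :=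
      (hmp.measure_preimage hSm.nullMeasurableSet).symm
    have hpre : (MeasurableEquiv.piFinSuccAbove (fun _ : Fin (n + 1) => ℝ) 0).symm ⁻¹' S =
        {p : ℝ × (Fin n → ℝ) | f (Fin.cons p.1 p.2) = 0} := by
      ext p
      simp only [Set.mem_preimage, hS, Set.mem_setOf_eq,
        MeasurableEquiv.piFinSuccAbove_symm_apply, Fin.insertNthEquiv_zero, Fin.consEquiv,
        Equiv.coe_fn_mk]
    rw [hvol, hpre]
    -- the product set is measurable
    have hcons : Continuous fun p : ℝ × (Fin n → ℝ) => (Fin.cons p.1 p.2 : Fin (n + 1) → ℝ) := by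
      apply continuous_pi
      intro i
      refine Fin.cases ?_ (fun j => ?_) i
      · simpa using continuous_fst
      · simpa using (show Continuous fun a : ℝ × (Fin n → ℝ) => a.2 j from
          (continuous_apply j).comp continuous_snd)
    have hPm : MeasurableSet {p : ℝ × (Fin n → ℝ) | f (Fin.cons p.1 p.2) = 0} :=
      (isClosed_eq (hfc.comp hcons) continuous_const).measurableSet
    have : (volume : Measure (ℝ × (Fin n → ℝ))) = (volume : Measure ℝ).prod volume := rfl
    rw [this, Measure.measure_prod_null hPm]
    -- the bad set of parameters t
    set h₀ : ℝ → ℝ := fun t => f (Fin.cons t (Fin.tail z)) with hh₀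
    have hh₀a : AnalyticOnNhd ℝ h₀ Set.univ := analytic_slice_left f hf (Fin.tail z)
    have hh₀ne : ∃ a, h₀ a ≠ 0 := ⟨z 0, by simpa [hh₀, Fin.cons_self_tail] using hz⟩
    have hbad : volume {t : ℝ | h₀ t = 0} = 0 :=
      (countable_zero_set_analytic_1d h₀ hh₀a hh₀ne).measure_zero _
    -- a.e. t, the slice has measure zero
    have hae : ∀ᵐ t : ℝ, volume (Prod.mk t ⁻¹' {p : ℝ × (Fin n → ℝ) | f (Fin.cons p.1 p.2) = 0}) = 0 := by
      refine (ae_iff.2 (measure_mono_null ?_ hbad))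
      intro t ht
      simp only [Set.mem_setOf_eq] at ht ⊢
      by_contra ht0
      apply ht
      have hnz : (fun y : Fin n → ℝ => f (Fin.cons t y)) ≠ 0 := by
        intro hcontra
        exact ht0 (congrFun hcontra (Fin.tail z))
      have hihres := ih (fun y => f (Fin.cons t y)) (analytic_slice_right f hf t) hnz
      have hslice : (Prod.mk t ⁻¹' {p : ℝ × (Fin n → ℝ) | f (Fin.cons p.1 p.2) = 0}) =
          {y : Fin n → ℝ | f (Fin.cons t y) = 0} := rfl
      rw [hslice]
      exact hihres
    exact hae.mono fun t ht => by simpa using ht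
end

section
/- Linear independence of a two-step factored family: let U = {u_i(y) | i in I} be a family of positive functions on R^{d_y} that is linearly independent under finite mixtures when restricted to any subset of R^{d_y} of positive Lebesgue measure, and let V = {v_j(z, y) | j in J} be a family of positive functions continuous in y such that (i) on some positive-measure set Y ⊂ R^{d_y}, for every positive-measure subsets Y' ⊂ Y and Z ⊂ R^{d_z}, V is linearly independent under finite mixtures on Z × Y', and (ii) for each fixed y, any finite linearly dependent subfamily of {z -> v_j(z,y)} on a positive-measure subset of R^{d_z} contains two identical functions on all of R^{d_z}. Then for any positive-measure Z ⊂ R^{d_z}, the product family {v_j(z,y) u_i(y) | i in I, j in J} is linearly independent under finite mixtures on Z × R^{d_y}. -/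
open MeasureTheory

/-- linear independence of a two-step factored family. Given a family
`u : I → (ℝ^{d_y} → ℝ)` of positive functions linearly independent under finite mixtures on
every positive-measure subset, and a family `v : J → (ℝ^{d_z} → ℝ^{d_y} → ℝ)` of positive
functions continuous in `y` satisfying (b4) and (b5), the product family
`(z, y) ↦ v j z y * u i y` is linearly independent under finite mixtures on `Z × ℝ^{d_y}`
for every positive-measure `Z`. -/
theorem two_step_factored_linear_independence
    {dy dz : ℕ} {I J : Type*}
    (u : I → (Fin dy → ℝ) → ℝ)
    (v : J → (Fin dz → ℝ) → (Fin dy → ℝ) → ℝ)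
    (hu_inj : Function.Injective u) (hv_inj : Function.Injective v)
    (hu_pos : ∀ i y, 0 < u i y)
    (hv_pos : ∀ j z y, 0 < v j z y)
    (hv_cont : ∀ j z, Continuous (fun y => v j z y))
    (hu_li : ∀ Y : Set (Fin dy → ℝ), 0 < volume Y → ∀ S : Finset I,
      LinearIndependent ℝ (fun i : S => Y.restrict (u i.1)))
    (hv_li : ∃ Y : Set (Fin dy → ℝ), 0 < volume Y ∧
      ∀ Y' : Set (Fin dy → ℝ), Y' ⊆ Y → 0 < volume Y' →
        ∀ Z : Set (Fin dz → ℝ), 0 < volume Z →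
          ∀ S : Finset J, LinearIndependent ℝ
            (fun j : S => (Z ×ˢ Y').restrict (fun p => v j.1 p.1 p.2)))
    (hv_dep : ∀ (y : Fin dy → ℝ) (Z : Set (Fin dz → ℝ)), 0 < volume Z →
      ∀ S : Finset J,
        ¬ LinearIndependent ℝ (fun j : S => Z.restrict (fun z => v j.1 z y)) →
          ∃ j ∈ S, ∃ j' ∈ S, j ≠ j' ∧ ∀ z, v j z y = v j' z y) :
    ∀ Z : Set (Fin dz → ℝ), 0 < volume Z →
      ∀ S : Finset (J × I),
        LinearIndependent ℝ (fun ji : S =>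
          (Z ×ˢ (Set.univ : Set (Fin dy → ℝ))).restrict
            (fun p => v ji.1.1 p.1 p.2 * u ji.1.2 p.2)) := by
  classical
  obtain ⟨Y, hYpos, hYli⟩ := hv_li
  intro Z hZ S
  rw [Fintype.linearIndependent_iff]
  intro c hc ji0
  -- extended coefficients
  set c' : J × I → ℝ := fun ji => if h : ji ∈ S then c ⟨ji, h⟩ else 0 with hc'def
  have hc'eq : ∀ ji : ↥S, c' ji.1 = c ji := by
    intro ji; simp [hc'def, ji.2]
  -- pointwise linear relation
  have hpt : ∀ z ∈ Z, ∀ y, ∑ ji ∈ S, c' ji * (v ji.1 z y * u ji.2 y) = 0 := by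
    intro z hz y
    have h1 := congrFun hc ⟨(z, y), Set.mk_mem_prod hz (Set.mem_univ y)⟩
    simp only [Finset.sum_apply, Pi.smul_apply, Set.restrict_apply, smul_eq_mul,
      Pi.zero_apply] at h1
    rw [← Finset.sum_coe_sort S (fun ji => c' ji * (v ji.1 z y * u ji.2 y)), ← h1]
    exact Finset.sum_congr rfl fun ji _ => by rw [hc'eq]; rfl
  set SJ : Finset J := S.image Prod.fst with hSJ
  set E : J → J → Set (Fin dy → ℝ) := fun j j' => {y | ∀ z, v j z y = v j' z y} with hE
  -- two v's coinciding on a positive measure subset of Y is impossible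
  have claim1 : ∀ j j', j ≠ j' → volume (Y ∩ E j j') = 0 := by
    intro j j' hjj'
    by_contra hne
    have hpos : 0 < volume (Y ∩ E j j') := pos_iff_ne_zero.mpr hne
    have hli := hYli _ Set.inter_subset_left hpos Z hZ {j, j'}
    have hmemj : j ∈ ({j, j'} : Finset J) := by simp
    have hmemj' : j' ∈ ({j, j'} : Finset J) := by simp
    have heq : (⟨j, hmemj⟩ : ({j, j'} : Finset J)) = ⟨j', hmemj'⟩ := by
      apply hli.injective
      funext p
      simp only [Set.restrict_apply]
      exact p.2.2.2 p.1.1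
    exact hjj' (Subtype.ext_iff.mp heq)
  set B : Set (Fin dy → ℝ) :=
    ⋃ j ∈ SJ, ⋃ j' ∈ SJ, if j = j' then ∅ else Y ∩ E j j' with hBdef
  have hB : volume B = 0 := by
    rw [hBdef]
    refine (measure_biUnion_null_iff SJ.countable_toSet).mpr ?_
    intro j _
    refine (measure_biUnion_null_iff SJ.countable_toSet).mpr ?_
    intro j' _
    by_cases h : j = j'
    · simp [h]
    · simp [h, claim1 j j' h]
  have hY0pos : 0 < volume (Y \ B) := by
    rw [measure_diff_null hB]; exact hYpos
  -- outside B, the slice family is linearly independent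
  have claim2 : ∀ y ∈ Y \ B, LinearIndependent ℝ
      (fun j : SJ => Z.restrict (fun z => v j.1 z y)) := by
    intro y hy
    by_contra hnli
    obtain ⟨j, hj, j', hj', hjj', heq⟩ := hv_dep y Z hZ SJ hnli
    refine hy.2 (Set.mem_biUnion hj (Set.mem_biUnion hj' ?_))
    rw [if_neg hjj']
    exact ⟨hy.1, heq⟩
  -- grouped coefficients vanish on Y \ B
  have claim3 : ∀ y ∈ Y \ B, ∀ j ∈ SJ,
      ∑ ji ∈ S.filter (fun ji => ji.1 = j), c' ji * u ji.2 y = 0 := by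
    intro y hy j hj
    have key : ∀ z ∈ Z, ∑ j ∈ SJ,
        (∑ ji ∈ S.filter (fun ji => ji.1 = j), c' ji * u ji.2 y) * v j z y = 0 := by
      intro z hz
      have h2 : ∑ j ∈ SJ, ∑ ji ∈ S.filter (fun ji => ji.1 = j),
          c' ji * u ji.2 y * v ji.1 z y = ∑ ji ∈ S, c' ji * u ji.2 y * v ji.1 z y :=
        Finset.sum_fiberwise_of_maps_to (fun ji hji => Finset.mem_image_of_mem Prod.fst hji) _
      calc ∑ j ∈ SJ, (∑ ji ∈ S.filter (fun ji => ji.1 = j), c' ji * u ji.2 y) * v j z y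
          = ∑ j ∈ SJ, ∑ ji ∈ S.filter (fun ji => ji.1 = j),
              c' ji * u ji.2 y * v ji.1 z y := by
            refine Finset.sum_congr rfl fun j _ => ?_
            rw [Finset.sum_mul]
            refine Finset.sum_congr rfl fun ji hji => ?_
            rw [(Finset.mem_filter.mp hji).2]
        _ = ∑ ji ∈ S, c' ji * u ji.2 y * v ji.1 z y := h2
        _ = 0 := by
            rw [← hpt z hz y]
            exact Finset.sum_congr rfl fun ji _ => by ring
    have hli := claim2 y hy
    rw [Fintype.linearIndependent_iff] at hli
    exact hli (fun j => ∑ ji ∈ S.filter (fun ji => ji.1 = j.1), c' ji * u ji.2 y)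
      (by
        funext z
        simp only [Finset.sum_apply, Pi.smul_apply, Set.restrict_apply, smul_eq_mul,
          Pi.zero_apply, Set.restrict]
        rw [Finset.sum_coe_sort SJ (fun j =>
          (∑ ji ∈ S.filter (fun ji => ji.1 = j), c' ji * u ji.2 y) * v j z.1 y)]
        exact key z.1 z.2) ⟨j, hj⟩
  -- finish: apply hu_li on Y \ B
  obtain ⟨⟨j, i⟩, hji0⟩ := ji0
  rw [← hc'eq ⟨(j, i), hji0⟩]
  have hj : j ∈ SJ := Finset.mem_image_of_mem Prod.fst hji0
  set T : Finset I := (S.filter (fun p => p.1 = j)).image Prod.snd with hT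
  have hiT : i ∈ T := Finset.mem_image.mpr
    ⟨(j, i), Finset.mem_filter.mpr ⟨hji0, rfl⟩, rfl⟩
  have hli := hu_li (Y \ B) hY0pos T
  rw [Fintype.linearIndependent_iff] at hli
  exact hli (fun i => c' (j, i.1))
    (by
      funext y
      simp only [Finset.sum_apply, Pi.smul_apply, Set.restrict_apply, smul_eq_mul,
        Pi.zero_apply, Set.restrict]
      rw [Finset.sum_coe_sort T (fun i => c' (j, i) * u i y.1)]
      rw [hT, Finset.sum_image (by
        rintro ⟨p1, p2⟩ hp ⟨q1, q2⟩ hq h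
        have hp1 := (Finset.mem_filter.mp hp).2
        have hq1 := (Finset.mem_filter.mp hq).2
        simp only at hp1 hq1 h
        subst hp1; subst h; rw [hq1])]
      rw [← claim3 y.1 y.2 j hj]
      refine Finset.sum_congr rfl fun p hp => ?_
      have hp1 := (Finset.mem_filter.mp hp).2
      rw [← hp1]) ⟨i, hiT⟩
end

section
/- If f : R^m -> R^n is a piecewise affine function such that the set {x in f(R^m) : |f^{-1}({x})| > 1} has measure zero with respect to the induced measure on f(R^m), then almost every point x in f(R^m) is generic with respect to f, meaning f^{-1}({x}) is finite and f is affine on a neighborhood of each preimage point. -/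
open MeasureTheory

/-- A polyhedron in `ℝ^m`: an intersection of finitely many affine half-spaces. -/
def IsPolyhedron {m : ℕ} (P : Set (Fin m → ℝ)) : Prop :=
  ∃ (k : ℕ) (L : Fin k → ((Fin m → ℝ) →ₗ[ℝ] ℝ)) (c : Fin k → ℝ),
    P = {x | ∀ i, L i x ≤ c i}

/-- A piecewise affine function: `ℝ^m` decomposes into finitely many polyhedral pieces on
each of which `f` is affine. -/
def IsPiecewiseAffine {m n : ℕ} (f : (Fin m → ℝ) → (Fin n → ℝ)) : Prop :=
  ∃ (k : ℕ) (P : Fin k → Set (Fin m → ℝ))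
    (g : Fin k → ((Fin m → ℝ) →ᵃ[ℝ] (Fin n → ℝ))),
    (∀ i, IsPolyhedron (P i)) ∧ (⋃ i, P i) = Set.univ ∧
      ∀ i, ∀ x ∈ P i, f x = g i x

/-- A point `x ∈ f(ℝ^m)` is generic with respect to `f` if its preimage is finite and `f`
is affine on a ball around each preimage point. -/
def IsGenericPt {m n : ℕ} (f : (Fin m → ℝ) → (Fin n → ℝ)) (x : Fin n → ℝ) : Prop :=
  (f ⁻¹' {x}).Finite ∧ ∃ δ > (0 : ℝ), ∀ z ∈ f ⁻¹' {x},
    ∃ g : (Fin m → ℝ) →ᵃ[ℝ] (Fin n → ℝ), ∀ w ∈ Metric.ball z δ, f w = g w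

/-- if `f` is piecewise affine and the set of points of `f(ℝ^m)` with multiple
preimages is null for the induced (`m`-dimensional Hausdorff) measure on `f(ℝ^m)`, then
almost every point of `f(ℝ^m)` is generic with respect to `f`. -/
theorem ae_generic_of_piecewise_affine
    {m n : ℕ} (f : (Fin m → ℝ) → (Fin n → ℝ))
    (hf : IsPiecewiseAffine f)
    (hnull : μH[(m : ℝ)] {x ∈ Set.range f | (f ⁻¹' {x}).Nontrivial} = 0) :
    μH[(m : ℝ)] {x ∈ Set.range f | ¬ IsGenericPt f x} = 0 := by
  obtain ⟨k, P, g, hPoly, hcover, hfg⟩ := hf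
  -- the set of points not in the interior of any piece
  set B : Set (Fin m → ℝ) := Set.univ \ ⋃ i, interior (P i) with hB
  -- B is Lebesgue-null, hence Hausdorff-m-null
  have hvol : (μH[(m : ℝ)] : Measure (Fin m → ℝ)) = volume := by
    simpa using (hausdorffMeasure_pi_real (ι := Fin m))
  have hconv : ∀ i, Convex ℝ (P i) := by
    intro i
    obtain ⟨k', L, c, hPeq⟩ := hPoly i
    rw [hPeq]
    have : {x : Fin m → ℝ | ∀ j, L j x ≤ c j} = ⋂ j, {x | L j x ≤ c j} := by
      ext x; simp
    rw [this]
    exact convex_iInter fun j => convex_halfSpace_le (L j).isLinear (c j)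
  have hBnull : μH[(m : ℝ)] B = 0 := by
    rw [hvol]
    have hsub : B ⊆ ⋃ i, frontier (P i) := by
      intro z hz
      obtain ⟨-, hz2⟩ := hz
      have hzc : z ∈ ⋃ i, P i := by rw [hcover]; trivial
      obtain ⟨i, hi⟩ := Set.mem_iUnion.1 hzc
      refine Set.mem_iUnion.2 ⟨i, subset_closure hi, fun h => hz2 (Set.mem_iUnion.2 ⟨i, h⟩)⟩
    refine measure_mono_null hsub (measure_iUnion_null fun i => ?_)
    exact (hconv i).addHaar_frontier volume
  -- each affine piece map is Lipschitz
  have hlip : ∀ i, ∃ K : NNReal, LipschitzWith K (g i) := by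
    intro i
    set L := LinearMap.toContinuousLinearMap (g i).linear with hL
    refine ⟨‖L‖₊, fun x y => ?_⟩
    have h1 : g i x - g i y = (g i).linear (x - y) := by
      rw [← vsub_eq_sub x y, (g i).linearMap_vsub, vsub_eq_sub]
    calc edist (g i x) (g i y) = edist (L (x - y)) 0 := by
          rw [edist_eq_enorm_sub, h1, edist_zero_right]
          rfl
      _ ≤ ‖L‖₊ * edist (x - y) 0 := by
          simpa using L.lipschitz (x - y) 0
      _ = ‖L‖₊ * edist x y := by
          rw [edist_zero_right, edist_eq_enorm_sub]
  -- the image of B is null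
  have himg : μH[(m : ℝ)] (f '' B) = 0 := by
    have hsub : f '' B ⊆ ⋃ i, g i '' B := by
      rintro y ⟨z, hzB, rfl⟩
      have hzc : z ∈ ⋃ i, P i := by rw [hcover]; trivial
      obtain ⟨i, hi⟩ := Set.mem_iUnion.1 hzc
      exact Set.mem_iUnion.2 ⟨i, z, hzB, (hfg i z hi).symm⟩
    refine measure_mono_null hsub (measure_iUnion_null fun i => ?_)
    obtain ⟨K, hK⟩ := hlip i
    have := hK.hausdorffMeasure_image_le (by positivity : (0:ℝ) ≤ (m:ℝ)) B
    rw [hBnull, mul_zero] at this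
    exact le_antisymm this zero_le
  -- non-generic points lie in the nontrivial-fiber set or in f '' B
  have hsub : {x ∈ Set.range f | ¬ IsGenericPt f x} ⊆
      {x ∈ Set.range f | (f ⁻¹' {x}).Nontrivial} ∪ f '' B := by
    rintro x ⟨hx, hng⟩
    by_cases hnt : (f ⁻¹' {x}).Nontrivial
    · exact Or.inl ⟨hx, hnt⟩
    obtain ⟨z, hz⟩ := hx
    have hss : (f ⁻¹' {x}).Subsingleton := Set.not_nontrivial_iff.1 hnt
    by_cases hzU : z ∈ ⋃ i, interior (P i)
    · exfalso
      apply hng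
      obtain ⟨i, hi⟩ := Set.mem_iUnion.1 hzU
      obtain ⟨δ, hδ, hball⟩ := Metric.isOpen_iff.1 isOpen_interior z hi
      refine ⟨hss.finite, δ, hδ, fun z' hz' => ?_⟩
      have hzz : z' = z := hss hz' (by simp [hz])
      subst hzz
      exact ⟨g i, fun w hw => hfg i w (interior_subset (hball hw))⟩
    · exact Or.inr ⟨z, ⟨trivial, hzU⟩, hz⟩
  refine measure_mono_null hsub ?_
  exact measure_union_null hnull himg
end

section
/- Integration of the analytic continuation of a locally defined mixture of Gaussian trajectory densities counts preimages: if p restricted to a ball B(x_0, δ) in R^{Tm} equals a finite sum over index tuples (i_1,...,i_T) of Markov-switching Gaussian joint densities (each a probability density on R^{Tm}), each summand arising from one affine branch of a piecewise affine map, then the integral over R^{Tm} of the unique analytic continuation of p|_{B(x_0,δ)} equals the number n^T of affine branches, where n is the number of branch indices per time step. -/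
open MeasureTheory

/-- if `p` restricted to a ball `B(x₀, δ)` in `ℝ^{Tm}` equals a finite sum,
over branch tuples `(i₁,...,i_T) ∈ {1,...,n}^T`, of analytic probability densities on
`ℝ^{Tm}` (each integrating to 1), then the integral over `ℝ^{Tm}` of the (unique) analytic
continuation of `p|_{B(x₀,δ)}` equals `n^T`, the number of affine branches. -/
theorem integral_of_analytic_continuation_counts_preimages
    {m T n : ℕ}
    (q : (Fin T → Fin n) → (Fin T → (Fin m → ℝ)) → ℝ)
    (hq_an : ∀ i, AnalyticOnNhd ℝ (q i) Set.univ)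
    (hq_nonneg : ∀ i x, 0 ≤ q i x)
    (hq_int : ∀ i, (∫ x, q i x) = 1)
    (p : (Fin T → (Fin m → ℝ)) → ℝ)
    (x₀ : Fin T → (Fin m → ℝ)) (δ : ℝ) (hδ : 0 < δ)
    (hagree : ∀ x ∈ Metric.ball x₀ δ, p x = ∑ i : Fin T → Fin n, q i x)
    (E : (Fin T → (Fin m → ℝ)) → ℝ)
    (hE_an : AnalyticOnNhd ℝ E Set.univ)
    (hE_agree : ∀ x ∈ Metric.ball x₀ δ, E x = p x) :
    (∫ x, E x) = (n : ℝ) ^ T := by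
  have hQ_an : AnalyticOnNhd ℝ (fun x => ∑ i : Fin T → Fin n, q i x) Set.univ := by
    apply Finset.analyticOnNhd_fun_sum
    intro i _
    exact hq_an i
  have hEq : E = fun x => ∑ i : Fin T → Fin n, q i x := by
    apply AnalyticOnNhd.eq_of_eventuallyEq hE_an hQ_an (z₀ := x₀)
    filter_upwards [Metric.ball_mem_nhds x₀ hδ] with x hx
    rw [hE_agree x hx, hagree x hx]
  have hq_integrable : ∀ i, Integrable (q i) := by
    intro i
    by_contra h
    have := hq_int i
    rw [integral_undef h] at this
    simpa using this
  rw [hEq, integral_finset_sum _ (fun i _ => hq_integrable i)]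
  simp [hq_int, Finset.card_univ]
end

section
/- If the joint Gaussian-analytic Markov switching families satisfy unique indexing, continuity in the conditioning variable, and zero-measure moment-intersection on some positive-measure region, then the family of joint trajectory densities {p_{a_1}(z_1) prod_{t=2}^T p_{a_t}(z_t|z_{t-1})} indexed by tuples (a_1,...,a_T) contains linearly independent functions on R^{Tm}, for every T ≥ 2. -/
open MeasureTheory

section Aux

open Filter Topology Matrix

section Analytic

variable {m : ℕ}

lemma analyticAt_coord (i : Fin m) (x : Fin m → ℝ) :
    AnalyticAt ℝ (fun v : Fin m → ℝ => v i) x :=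
  (ContinuousLinearMap.proj i : (Fin m → ℝ) →L[ℝ] ℝ).analyticAt x

lemma analyticAt_dot_mulVec (M : Matrix (Fin m) (Fin m) ℝ) (μ : Fin m → ℝ) (x : Fin m → ℝ) :
    AnalyticAt ℝ (fun v : Fin m → ℝ => dotProduct (v - μ) (M.mulVec (v - μ))) x := by
  have hrw : (fun v : Fin m → ℝ => dotProduct (v - μ) (M.mulVec (v - μ)))
      = fun v => ∑ i, (v i - μ i) * ∑ j, M i j * (v j - μ j) := by
    funext v
    simp [dotProduct, Matrix.mulVec]
  rw [hrw]
  apply Finset.analyticAt_fun_sum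
  intro i _
  apply AnalyticAt.mul
  · exact (analyticAt_coord i x).sub analyticAt_const
  · apply Finset.analyticAt_fun_sum
    intro j _
    exact analyticAt_const.mul ((analyticAt_coord j x).sub analyticAt_const)

lemma analyticAt_dot_vec (d : Fin m → ℝ) (x : Fin m → ℝ) :
    AnalyticAt ℝ (fun v : Fin m → ℝ => dotProduct d v) x := by
  have hrw : (fun v : Fin m → ℝ => dotProduct d v) = fun v => ∑ i, d i * v i := by
    funext v; simp [dotProduct]
  rw [hrw]
  apply Finset.analyticAt_fun_sum
  intro i _
  exact analyticAt_const.mul (analyticAt_coord i x)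

lemma analyticAt_gaussianPDF (μ : Fin m → ℝ) (S : Matrix (Fin m) (Fin m) ℝ) (x : Fin m → ℝ) :
    AnalyticAt ℝ (gaussianPDF μ S) x := by
  unfold gaussianPDF
  exact analyticAt_const.mul
    ((analyticAt_const.mul (analyticAt_dot_mulVec S⁻¹ μ x)).rexp)

/-- Identity theorem: an everywhere-analytic function on `ℝ^m` vanishing on a nonempty open
set vanishes identically. -/
lemma eq_zero_of_analytic_zero_on_open {f : (Fin m → ℝ) → ℝ}
    (hf : ∀ x, AnalyticAt ℝ f x) {U : Set (Fin m → ℝ)} (hU : IsOpen U) (hne : U.Nonempty)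
    (h0 : ∀ x ∈ U, f x = 0) (x : Fin m → ℝ) : f x = 0 := by
  obtain ⟨z₀, hz₀⟩ := hne
  have key := AnalyticOnNhd.eqOn_zero_of_preconnected_of_eventuallyEq_zero
    (f := f) (U := Set.univ) (fun y _ => hf y) isPreconnected_univ (Set.mem_univ z₀)
    (Filter.eventuallyEq_of_mem (hU.mem_nhds hz₀) h0)
  exact key (Set.mem_univ x)

end Analytic

section SepVec

variable {m : ℕ}

lemma quadform_ne_zero {D : Matrix (Fin m) (Fin m) ℝ} (hsym : Dᵀ = D) (hD : D ≠ 0) :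
    ∃ v, dotProduct v (D.mulVec v) ≠ 0 := by
  by_contra h
  push_neg at h
  apply hD
  ext i j
  have key : ∀ k l, dotProduct (Pi.single k (1:ℝ)) (D.mulVec (Pi.single l 1)) = D k l := by
    intro k l
    rw [Matrix.mulVec_single, single_dotProduct]
    simp
  have h1 := h (Pi.single i 1 + Pi.single j 1)
  simp only [Matrix.mulVec_add, add_dotProduct, dotProduct_add, key] at h1
  have h2 := h (Pi.single i 1)
  rw [key] at h2
  have h3 := h (Pi.single j 1)
  rw [key] at h3
  have hji : D j i = D i j := by
    conv_rhs => rw [← hsym]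
    rw [Matrix.transpose_apply]
  simp only [Matrix.zero_apply]
  linarith

lemma exists_sep_vec {ι : Type*} (s : Finset ι) (A : ι → Matrix (Fin m) (Fin m) ℝ)
    (b : ι → (Fin m → ℝ)) (hsym : ∀ i, (A i)ᵀ = A i)
    (hinj : ∀ i ∈ s, ∀ j ∈ s, A i = A j → b i = b j → i = j) :
    ∃ v : Fin m → ℝ, ∀ i ∈ s, ∀ j ∈ s,
      dotProduct v ((A i).mulVec v) = dotProduct v ((A j).mulVec v) →
      dotProduct v (b i) = dotProduct v (b j) → i = j := by
  classical
  set f : ι × ι → (Fin m → ℝ) → ℝ := fun p v =>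
    (dotProduct v ((A p.1 - A p.2).mulVec v)) ^ 2
      + (dotProduct (b p.1 - b p.2) v) ^ 2 with hf
  have hfa : ∀ p x, AnalyticAt ℝ (f p) x := by
    intro p x
    apply AnalyticAt.add
    · have := analyticAt_dot_mulVec (A p.1 - A p.2) 0 x
      simp only [sub_zero] at this
      exact this.pow 2
    · exact (analyticAt_dot_vec (b p.1 - b p.2) x).pow 2
  set t : Finset (ι × ι) := (s ×ˢ s).filter (fun p => ¬ (A p.1 = A p.2 ∧ b p.1 = b p.2)) with ht
  have hdense : ∀ p ∈ t, {v | f p v ≠ 0} ∈ residual (Fin m → ℝ) := by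
    intro p hp
    rw [ht, Finset.mem_filter] at hp
    have hc : Continuous (f p) := by
      rw [continuous_iff_continuousAt]; exact fun x => (hfa p x).continuousAt
    have hopen : IsOpen {v | f p v ≠ 0} :=
      (isClosed_eq hc continuous_const).isOpen_compl
    -- a witness where f p is nonzero
    have hwit : ∃ v₀, f p v₀ ≠ 0 := by
      by_cases hb : b p.1 = b p.2
      · have hA : A p.1 ≠ A p.2 := by
          intro hAe; exact hp.2 ⟨hAe, hb⟩
        obtain ⟨v₀, hv₀⟩ := quadform_ne_zero
          (D := A p.1 - A p.2)
          (by rw [Matrix.transpose_sub, hsym, hsym]) (sub_ne_zero.mpr hA)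
        refine ⟨v₀, ?_⟩
        have h1 : (0:ℝ) < (dotProduct v₀ ((A p.1 - A p.2).mulVec v₀)) ^ 2 :=
          lt_of_le_of_ne (sq_nonneg _) (Ne.symm (pow_ne_zero 2 hv₀))
        rw [hf]
        exact (add_pos_of_pos_of_nonneg h1 (sq_nonneg _)).ne'
      · refine ⟨b p.1 - b p.2, ?_⟩
        have hd : b p.1 - b p.2 ≠ 0 := sub_ne_zero.mpr hb
        have h2 : (0:ℝ) < (dotProduct (b p.1 - b p.2) (b p.1 - b p.2)) ^ 2 :=
          lt_of_le_of_ne (sq_nonneg _)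
            (Ne.symm (pow_ne_zero 2 ((dotProduct_self_eq_zero).not.mpr hd)))
        rw [hf]
        exact (add_pos_of_nonneg_of_pos (sq_nonneg _) h2).ne'
    obtain ⟨v₀, hv₀⟩ := hwit
    -- the zero set has empty interior
    have hint : interior {v | f p v = 0} = ∅ := by
      by_contra hne
      obtain ⟨x, hx⟩ := Set.nonempty_iff_ne_empty.mpr hne
      have hz : ∀ y, f p y = 0 := fun y =>
        eq_zero_of_analytic_zero_on_open (U := interior {v | f p v = 0}) (hfa p)
          isOpen_interior ⟨x, hx⟩ (fun w hw => (interior_subset (s := {v | f p v = 0}) hw : f p w = 0)) y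
      exact hv₀ (hz v₀)
    apply residual_of_dense_open hopen
    have hco : {v | f p v ≠ 0} = {v | f p v = 0}ᶜ := rfl
    rw [hco, ← interior_eq_empty_iff_dense_compl]
    exact hint
  -- intersect over all pairs
  have hres : (⋂ p ∈ t, {v | f p v ≠ 0}) ∈ residual (Fin m → ℝ) :=
    (Filter.biInter_finset_mem t).mpr hdense
  obtain ⟨v, hv⟩ := (dense_of_mem_residual hres).nonempty
  simp only [Set.mem_iInter, Set.mem_setOf_eq] at hv
  refine ⟨v, ?_⟩
  intro i hi j hj hq hd
  by_contra hij
  have hpt : (i, j) ∈ t := by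
    rw [ht, Finset.mem_filter]
    exact ⟨Finset.mem_product.mpr ⟨hi, hj⟩, fun hc' => hij (hinj i hi j hj hc'.1 hc'.2)⟩
  apply hv (i, j) hpt
  rw [hf]
  have e1 : dotProduct v ((A i - A j).mulVec v) = 0 := by
    rw [Matrix.sub_mulVec, dotProduct_sub, hq, sub_self]
  have e2 : dotProduct (b i - b j) v = 0 := by
    rw [sub_dotProduct, dotProduct_comm (b i) v, dotProduct_comm (b j) v,
      hd, sub_self]
  simp [e1, e2]

end SepVec

lemma expquad_zero {ι : Type*} (α β c : ι → ℝ) (s : Finset ι)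
    (hinj : ∀ i ∈ s, ∀ j ∈ s, α i = α j → β i = β j → i = j)
    (hsum : ∀ t : ℝ, ∑ i ∈ s, c i * Real.exp (α i * t ^ 2 + β i * t) = 0) :
    ∀ i ∈ s, c i = 0 := by
  classical
  induction s using Finset.strongInduction with
  | _ s ih =>
    intro i hi
    have hne : s.Nonempty := ⟨i, hi⟩
    obtain ⟨j0, hj0, hj0M⟩ := s.exists_mem_eq_sup' hne α
    set s1 : Finset ι := s.filter (fun j => α j = α j0) with hs1
    have hne1 : s1.Nonempty := ⟨j0, Finset.mem_filter.mpr ⟨hj0, rfl⟩⟩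
    obtain ⟨i0, hi0s1, hi0B⟩ := s1.exists_mem_eq_sup' hne1 β
    have hi0s : i0 ∈ s := (Finset.mem_filter.mp hi0s1).1
    have hαi0 : α i0 = α j0 := (Finset.mem_filter.mp hi0s1).2
    have hkey : ∀ j ∈ s, j ≠ i0 → α j < α i0 ∨ (α j = α i0 ∧ β j < β i0) := by
      intro j hj hji0
      have hle : α j ≤ α i0 := by
        rw [hαi0, ← hj0M]; exact Finset.le_sup' α hj
      rcases lt_or_eq_of_le hle with h | h
      · exact Or.inl h
      · right
        refine ⟨h, ?_⟩
        have hjs1 : j ∈ s1 := Finset.mem_filter.mpr ⟨hj, by rw [h, hαi0]⟩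
        have hble : β j ≤ β i0 := by rw [← hi0B]; exact Finset.le_sup' β hjs1
        rcases lt_or_eq_of_le hble with hb | hb
        · exact hb
        · exact absurd (hinj j hj i0 hi0s h hb) hji0
    -- c i0 = 0
    have hci0 : c i0 = 0 := by
      have htend : Tendsto
          (fun t : ℝ => ∑ j ∈ s, c j * Real.exp ((α j - α i0) * t ^ 2 + (β j - β i0) * t))
          atTop (𝓝 (∑ j ∈ s, if j = i0 then c j else 0)) := by
        apply tendsto_finset_sum
        intro j hj
        by_cases hji : j = i0
        · subst hji
          simp only [if_pos rfl, sub_self, zero_mul, add_zero, Real.exp_zero, mul_one]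
          exact tendsto_const_nhds
        · simp only [if_neg hji]
          have hEbot : Tendsto (fun t : ℝ => (α j - α i0) * t ^ 2 + (β j - β i0) * t)
              atTop atBot := by
            rcases hkey j hj hji with h | ⟨heq, h2⟩
            · have h1 : Tendsto (fun t : ℝ => (α j - α i0) * t + (β j - β i0)) atTop atBot := by
                apply tendsto_atBot_add_const_right
                exact (tendsto_const_mul_atBot_of_neg (by linarith)).mpr tendsto_id
              have := Filter.Tendsto.atTop_mul_atBot₀ (tendsto_id (x := (atTop : Filter ℝ))) h1
              apply this.congr
              intro t; simp [id]; ring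
            · have hlin : Tendsto (fun t : ℝ => (β j - β i0) * t) atTop atBot :=
                (tendsto_const_mul_atBot_of_neg (by linarith)).mpr tendsto_id
              apply hlin.congr
              intro t
              have h0 : α j - α i0 = 0 := by rw [heq]; ring
              rw [h0, zero_mul, zero_add]
          have h3 := Filter.Tendsto.const_mul (c j) (Real.tendsto_exp_atBot.comp hEbot)
          simpa [Function.comp] using h3
      have hzero : ∀ t : ℝ,
          ∑ j ∈ s, c j * Real.exp ((α j - α i0) * t ^ 2 + (β j - β i0) * t)
          = (∑ j ∈ s, c j * Real.exp (α j * t ^ 2 + β j * t))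
            * Real.exp (-(α i0 * t ^ 2 + β i0 * t)) := by
        intro t
        rw [Finset.sum_mul]
        apply Finset.sum_congr rfl
        intro j hj
        rw [mul_assoc, ← Real.exp_add]
        ring_nf
      have htend0 : Tendsto
          (fun t : ℝ => ∑ j ∈ s, c j * Real.exp ((α j - α i0) * t ^ 2 + (β j - β i0) * t))
          atTop (𝓝 0) := by
        have : (fun t : ℝ => ∑ j ∈ s, c j * Real.exp ((α j - α i0) * t ^ 2 + (β j - β i0) * t))
            = fun _ => (0 : ℝ) := by
          funext t; rw [hzero t, hsum t, zero_mul]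
        rw [this]; exact tendsto_const_nhds
      have h4 := tendsto_nhds_unique htend htend0
      simpa [Finset.sum_ite_eq', hi0s] using h4
    by_cases hii0 : i = i0
    · rwa [hii0]
    · refine ih (s.erase i0) (Finset.erase_ssubset hi0s) ?_ ?_ i (Finset.mem_erase.mpr ⟨hii0, hi⟩)
      · intro a ha b hb
        exact hinj a (Finset.mem_of_mem_erase ha) b (Finset.mem_of_mem_erase hb)
      · intro t
        rw [Finset.sum_erase_eq_sub hi0s, hsum t, hci0, zero_mul, sub_zero]

section Gauss

variable {m : ℕ}

lemma gaussianPDF_pos (μ : Fin m → ℝ) {S : Matrix (Fin m) (Fin m) ℝ} (hS : S.PosDef)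
    (x : Fin m → ℝ) : 0 < gaussianPDF μ S x := by
  unfold gaussianPDF
  apply mul_pos _ (Real.exp_pos _)
  rw [inv_pos]
  apply Real.sqrt_pos.mpr
  have h1 : (0:ℝ) < (2 * Real.pi) ^ m := pow_pos (by positivity) m
  exact mul_pos h1 hS.det_pos

lemma gauss_zero {ι : Type*} (s : Finset ι) (Mu : ι → Fin m → ℝ)
    (Sg : ι → Matrix (Fin m) (Fin m) ℝ) (hpd : ∀ i, (Sg i).PosDef)
    (hinj : ∀ i ∈ s, ∀ j ∈ s, Mu i = Mu j → Sg i = Sg j → i = j)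
    (c : ι → ℝ) (hsum : ∀ x, ∑ i ∈ s, c i * gaussianPDF (Mu i) (Sg i) x = 0) :
    ∀ i ∈ s, c i = 0 := by
  classical
  set A : ι → Matrix (Fin m) (Fin m) ℝ := fun i => (Sg i)⁻¹ with hA
  set b : ι → (Fin m → ℝ) := fun i => (A i).mulVec (Mu i) with hb
  have hdet : ∀ i, IsUnit (Sg i).det := fun i => isUnit_iff_ne_zero.mpr (hpd i).det_pos.ne'
  have hApd : ∀ i, (A i).PosDef := fun i => (hpd i).inv
  have hAsym : ∀ i, (A i)ᵀ = A i := by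
    intro i
    have h := (hApd i).isHermitian
    rwa [Matrix.IsHermitian, Matrix.conjTranspose_eq_transpose_of_trivial] at h
  have hAdet : ∀ i, IsUnit (A i).det := fun i => isUnit_iff_ne_zero.mpr (hApd i).det_pos.ne'
  have hAinj : ∀ i ∈ s, ∀ j ∈ s, A i = A j → b i = b j → i = j := by
    intro i hi j hj hAe hbe
    have hSe : Sg i = Sg j := by
      have hAe' : (Sg i)⁻¹ = (Sg j)⁻¹ := hAe
      rw [← Matrix.nonsing_inv_nonsing_inv (Sg i) (hdet i),
        ← Matrix.nonsing_inv_nonsing_inv (Sg j) (hdet j), hAe']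
    have hMue : Mu i = Mu j := by
      have h1 : (Sg i).mulVec (b i) = Mu i := by
        rw [hb, Matrix.mulVec_mulVec, hA, Matrix.mul_nonsing_inv _ (hdet i), Matrix.one_mulVec]
      have h2 : (Sg j).mulVec (b j) = Mu j := by
        rw [hb, Matrix.mulVec_mulVec, hA, Matrix.mul_nonsing_inv _ (hdet j), Matrix.one_mulVec]
      rw [← h1, ← h2, hSe, hbe]
    exact hinj i hi j hj hMue hSe
  obtain ⟨v, hv⟩ := exists_sep_vec s A b hAsym hAinj
  -- restrict to the line t • v
  set al : ι → ℝ := fun i => -(1/2) * dotProduct v ((A i).mulVec v) with hal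
  set be : ι → ℝ := fun i => dotProduct v (b i) with hbe
  set K : ι → ℝ := fun i => (Real.sqrt ((2 * Real.pi) ^ m * (Sg i).det))⁻¹ *
    Real.exp (-(1/2) * dotProduct (Mu i) ((A i).mulVec (Mu i))) with hK
  have hsymdot : ∀ i (u w : Fin m → ℝ),
      dotProduct u ((A i).mulVec w) = dotProduct w ((A i).mulVec u) := by
    intro i u w
    rw [Matrix.dotProduct_mulVec]
    conv_lhs => rw [← hAsym i]
    rw [Matrix.vecMul_transpose, dotProduct_comm]
  have hline : ∀ i, ∀ t : ℝ, gaussianPDF (Mu i) (Sg i) (t • v)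
      = K i * Real.exp (al i * t ^ 2 + be i * t) := by
    intro i t
    unfold gaussianPDF
    rw [show (Sg i)⁻¹ = A i from rfl]
    have hexp : dotProduct (t • v - Mu i) ((A i).mulVec (t • v - Mu i))
        = t ^ 2 * dotProduct v ((A i).mulVec v)
          - 2 * t * dotProduct v (b i)
          + dotProduct (Mu i) ((A i).mulVec (Mu i)) := by
      simp only [Matrix.mulVec_sub, Matrix.mulVec_smul, sub_dotProduct,
        dotProduct_sub, smul_dotProduct, dotProduct_smul,
        smul_eq_mul, hb]
      rw [hsymdot i (Mu i) v]
      ring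
    rw [hexp]
    simp only [hK, hal, hbe]
    rw [mul_assoc ((Real.sqrt ((2 * Real.pi) ^ m * (Sg i).det))⁻¹), ← Real.exp_add]
    congr 1
    ring
  have hinj2 : ∀ i ∈ s, ∀ j ∈ s, al i = al j → be i = be j → i = j := by
    intro i hi j hj hale hbee
    apply hv i hi j hj
    · have : dotProduct v ((A i).mulVec v) = dotProduct v ((A j).mulVec v) := by
        have := hale
        rw [hal] at this
        simp only at this
        linarith
      exact this
    · rw [hbe] at hbee
      exact hbee
  have hsum2 : ∀ t : ℝ, ∑ i ∈ s, (c i * K i) * Real.exp (al i * t ^ 2 + be i * t) = 0 := by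
    intro t
    have := hsum (t • v)
    rw [← this]
    apply Finset.sum_congr rfl
    intro i _
    rw [hline i t]
    ring
  have hfin := expquad_zero al be (fun i => c i * K i) s hinj2 hsum2
  intro i hi
  have hKpos : 0 < K i := by
    rw [hK]
    apply mul_pos _ (Real.exp_pos _)
    rw [inv_pos]
    apply Real.sqrt_pos.mpr
    exact mul_pos (pow_pos (by positivity) m) (hpd i).det_pos
  have := hfin i hi
  exact (mul_eq_zero.mp this).resolve_right hKpos.ne'

end Gauss

section Main

variable {m : ℕ} {A : Type*}

/-- Joint trajectory density with `n` transition factors. -/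
noncomputable def trajPDF (μ : A → (Fin m → ℝ)) (Sig1 : A → Matrix (Fin m) (Fin m) ℝ)
    (mf : (Fin m → ℝ) → A → (Fin m → ℝ)) (Sf : (Fin m → ℝ) → A → Matrix (Fin m) (Fin m) ℝ)
    (n : ℕ) (a : Fin (n + 1) → A) (z : Fin (n + 1) → (Fin m → ℝ)) : ℝ :=
  gaussianPDF (μ (a 0)) (Sig1 (a 0)) (z 0) *
    ∏ t : Fin n,
      gaussianPDF (mf (z t.castSucc) (a t.succ)) (Sf (z t.castSucc) (a t.succ)) (z t.succ)

variable (μ : A → (Fin m → ℝ)) (Sig1 : A → Matrix (Fin m) (Fin m) ℝ)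
  (mf : (Fin m → ℝ) → A → (Fin m → ℝ)) (Sf : (Fin m → ℝ) → A → Matrix (Fin m) (Fin m) ℝ)

lemma trajPDF_snoc (n : ℕ) (a : Fin (n + 2) → A) (z' : Fin (n + 1) → (Fin m → ℝ))
    (x : Fin m → ℝ) :
    trajPDF μ Sig1 mf Sf (n + 1) a (Fin.snoc z' x)
      = trajPDF μ Sig1 mf Sf n (fun t => a t.castSucc) z' *
        gaussianPDF (mf (z' (Fin.last n)) (a (Fin.last (n + 1))))
          (Sf (z' (Fin.last n)) (a (Fin.last (n + 1)))) x := by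
  unfold trajPDF
  rw [Fin.prod_univ_castSucc]
  rw [mul_assoc]
  congr 1
  congr 1
  · apply Finset.prod_congr rfl
    intro t _
    rw [Fin.succ_castSucc, Fin.snoc_castSucc, Fin.snoc_castSucc]
  · rw [Fin.succ_last, Fin.snoc_last, Fin.snoc_castSucc]

lemma trajPDF_last_form (hinit_pd : ∀ a, (Sig1 a).PosDef) (htrans_pd : ∀ z a, (Sf z a).PosDef)
    (n : ℕ) (p : Fin (n + 1) → A) (z'' : Fin n → (Fin m → ℝ)) :
    ∃ (K : ℝ) (μ' : Fin m → ℝ) (S' : Matrix (Fin m) (Fin m) ℝ), S'.PosDef ∧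
      ∀ x, trajPDF μ Sig1 mf Sf n p (Fin.snoc z'' x) = K * gaussianPDF μ' S' x := by
  cases n with
  | zero =>
      refine ⟨1, μ (p 0), Sig1 (p 0), hinit_pd _, ?_⟩
      intro x
      unfold trajPDF
      simp only [Finset.univ_eq_empty, Finset.prod_empty, mul_one, one_mul]
      congr 1
  | succ k =>
      refine ⟨trajPDF μ Sig1 mf Sf k (fun t => p t.castSucc) z'',
        mf (z'' (Fin.last k)) (p (Fin.last (k + 1))),
        Sf (z'' (Fin.last k)) (p (Fin.last (k + 1))), htrans_pd _ _, ?_⟩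
      intro x
      exact trajPDF_snoc μ Sig1 mf Sf k p z'' x

lemma main_zero (hinit_pd : ∀ a, (Sig1 a).PosDef) (htrans_pd : ∀ z a, (Sf z a).PosDef)
    (hinit_uniq : Function.Injective (fun a => (μ a, Sig1 a)))
    (L : Finset A) (U : Set (Fin m → ℝ)) (hUo : IsOpen U) (hUne : U.Nonempty)
    (hsep : ∀ a ∈ L, ∀ a' ∈ L, ∀ z ∈ U, mf z a = mf z a' → Sf z a = Sf z a' → a = a') :
    ∀ (n : ℕ) (S : Finset (Fin (n + 1) → A)), (∀ a ∈ S, ∀ t, a t ∈ L) →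
      ∀ (c : (Fin (n + 1) → A) → ℝ),
      (∀ z, ∑ a ∈ S, c a * trajPDF μ Sig1 mf Sf n a z = 0) → ∀ a ∈ S, c a = 0 := by
  classical
  intro n
  induction n with
  | zero =>
      intro S _ c hsum a ha
      apply gauss_zero S (fun a => μ (a 0)) (fun a => Sig1 (a 0)) (fun a => hinit_pd _) ?_ c ?_ a ha
      · intro i _ j _ hμ hS
        have hij : i 0 = j 0 := by
          have := hinit_uniq (a₁ := i 0) (a₂ := j 0) (by simp [hμ, hS])
          exact this
        funext t
        rw [Fin.fin_one_eq_zero t, hij]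
      · intro x
        have h := hsum (fun _ => x)
        simpa [trajPDF] using h
  | succ n ih =>
      intro S hSL c hsum a ha
      set lastf : (Fin (n + 2) → A) → A := fun a => a (Fin.last (n + 1)) with hlastf
      set pre : (Fin (n + 2) → A) → (Fin (n + 1) → A) := fun a t => a t.castSucc with hpre
      -- Step 1: for z' with last coordinate in U, the fiber sums vanish.
      have claim1 : ∀ (z' : Fin (n + 1) → (Fin m → ℝ)), z' (Fin.last n) ∈ U →
          ∀ b ∈ S.image lastf,
            ∑ a ∈ S.filter (fun a => lastf a = b), c a * trajPDF μ Sig1 mf Sf n (pre a) z' = 0 := by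
        intro z' hz'
        set w := z' (Fin.last n) with hw
        apply gauss_zero (S.image lastf) (fun b => mf w b) (fun b => Sf w b)
          (fun b => htrans_pd _ _) ?_ _ ?_
        · intro i hi j hj hμ hS
          obtain ⟨ai, hai, hai'⟩ := Finset.mem_image.mp hi
          obtain ⟨aj, haj, haj'⟩ := Finset.mem_image.mp hj
          exact hsep i (hai' ▸ hSL ai hai _) j (haj' ▸ hSL aj haj _) w hz' hμ hS
        · intro x
          have key := hsum (Fin.snoc z' x)
          rw [← key]
          rw [← Finset.sum_fiberwise_of_maps_to (g := lastf) (t := S.image lastf)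
            (fun a ha => Finset.mem_image_of_mem lastf ha)]
          apply Finset.sum_congr rfl
          intro b _
          rw [Finset.sum_mul]
          apply Finset.sum_congr rfl
          intro a' ha'
          have hb : lastf a' = b := (Finset.mem_filter.mp ha').2
          rw [trajPDF_snoc]
          rw [← hb]
          ring
      -- Step 2: the fiber sums vanish for every z' (analytic continuation).
      have claim2 : ∀ b ∈ S.image lastf, ∀ (z' : Fin (n + 1) → (Fin m → ℝ)),
          ∑ a ∈ S.filter (fun a => lastf a = b), c a * trajPDF μ Sig1 mf Sf n (pre a) z' = 0 := by
        intro b hb z'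
        have hz'eq : Fin.snoc (Fin.init z') (z' (Fin.last n)) = z' := Fin.snoc_init_self z'
        rw [← hz'eq]
        set z'' := Fin.init z' with hz''
        -- the function of the last coordinate
        have hform := fun (a : Fin (n + 2) → A) =>
          trajPDF_last_form μ Sig1 mf Sf hinit_pd htrans_pd n (pre a) z''
        choose K μ' S' hpd' hKform using hform
        have hfun : ∀ x, ∑ a ∈ S.filter (fun a => lastf a = b),
            c a * trajPDF μ Sig1 mf Sf n (pre a) (Fin.snoc z'' x)
            = ∑ a ∈ S.filter (fun a => lastf a = b), (c a * K a) * gaussianPDF (μ' a) (S' a) x := by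
          intro x
          apply Finset.sum_congr rfl
          intro a' _
          rw [hKform a' x]
          ring
        have hanalytic : ∀ x, AnalyticAt ℝ
            (fun x => ∑ a ∈ S.filter (fun a => lastf a = b),
              (c a * K a) * gaussianPDF (μ' a) (S' a) x) x := by
          intro x
          apply Finset.analyticAt_fun_sum
          intro a' _
          exact analyticAt_const.mul (analyticAt_gaussianPDF (μ' a') (S' a') x)
        have hvanish : ∀ x ∈ U, (fun x => ∑ a ∈ S.filter (fun a => lastf a = b),
            (c a * K a) * gaussianPDF (μ' a) (S' a) x) x = 0 := by
          intro x hx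
          show ∑ a ∈ S.filter (fun a => lastf a = b),
            (c a * K a) * gaussianPDF (μ' a) (S' a) x = 0
          rw [← hfun x]
          have hlastmem : (Fin.snoc z'' x : Fin (n + 1) → (Fin m → ℝ)) (Fin.last n) ∈ U := by
            rw [Fin.snoc_last]; exact hx
          exact claim1 (Fin.snoc z'' x) hlastmem b hb
        have hall := eq_zero_of_analytic_zero_on_open hanalytic hUo hUne hvanish
          (z' (Fin.last n))
        exact (hfun _).trans hall
      -- Step 3: apply the induction hypothesis per fiber.
      set b₀ := lastf a with hb₀
      have hb₀mem : b₀ ∈ S.image lastf := Finset.mem_image_of_mem lastf ha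
      set T := S.filter (fun a => lastf a = b₀) with hT
      have hpreinj : Set.InjOn pre T := by
        intro a1 h1 a2 h2 hpe
        have hl1 : lastf a1 = b₀ := (Finset.mem_filter.mp (Finset.mem_coe.mp h1)).2
        have hl2 : lastf a2 = b₀ := (Finset.mem_filter.mp (Finset.mem_coe.mp h2)).2
        funext t
        refine Fin.lastCases ?_ ?_ t
        · exact hl1.trans hl2.symm
        · intro i
          exact congrFun hpe i
      have haT : a ∈ T := Finset.mem_filter.mpr ⟨ha, rfl⟩
      have hkey := ih (T.image pre) ?_ (fun p => c (Fin.snoc p b₀)) ?_ (pre a)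
        (Finset.mem_image_of_mem pre haT)
      · have hsnoc : Fin.snoc (pre a) b₀ = a := Fin.snoc_init_self a
        have hkey' : c (Fin.snoc (pre a) b₀) = 0 := hkey
        rwa [hsnoc] at hkey'
      · intro p hp t
        obtain ⟨a', ha', rfl⟩ := Finset.mem_image.mp hp
        exact hSL a' (Finset.mem_filter.mp ha').1 t.castSucc
      · intro z'
        rw [Finset.sum_image (fun x hx y hy => hpreinj hx hy)]
        have : ∀ a' ∈ T, c (Fin.snoc (pre a') b₀) * trajPDF μ Sig1 mf Sf n (pre a') z'
            = c a' * trajPDF μ Sig1 mf Sf n (pre a') z' := by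
          intro a' ha'
          have hl : lastf a' = b₀ := (Finset.mem_filter.mp ha').2
          have hsnoc : Fin.snoc (pre a') b₀ = a' := by
            rw [← hl]
            exact Fin.snoc_init_self a'
          rw [hsnoc]
        rw [Finset.sum_congr rfl this]
        exact claim2 b₀ hb₀mem z'

end Main


end Aux

/-- under unique indexing, continuity in the conditioning variable, and
zero-measure moment-intersection on a positive-measure region, the family of joint
Gaussian Markov-switching trajectory densities, indexed by tuples `(a₁,...,a_T)`, is
linearly independent on `ℝ^{Tm}` for every `T ≥ 2` (trajectories of length `T = T' + 2`). -/
theorem msm_joint_densities_linearIndependent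
    {m : ℕ} {A : Type*}
    (μ : A → (Fin m → ℝ)) (Sig1 : A → Matrix (Fin m) (Fin m) ℝ)
    (mf : (Fin m → ℝ) → A → (Fin m → ℝ))
    (Sf : (Fin m → ℝ) → A → Matrix (Fin m) (Fin m) ℝ)
    (hinit_pd : ∀ a, (Sig1 a).PosDef)
    (htrans_pd : ∀ z a, (Sf z a).PosDef)
    -- (d1) unique indexing
    (hinit_uniq : Function.Injective (fun a => (μ a, Sig1 a)))
    (htrans_uniq : ∀ a a', a ≠ a' → ∃ z, mf z a ≠ mf z a' ∨ Sf z a ≠ Sf z a')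
    -- (d2) continuity in the conditioning variable
    (hmean_cont : ∀ a, Continuous (fun z => mf z a))
    (hcov_cont : ∀ a i j, Continuous (fun z => Sf z a i j))
    -- (d3) zero-measure moment intersection on a positive-measure region
    (hzero : ∃ X₀ : Set (Fin m → ℝ), 0 < volume X₀ ∧ ∀ a a', a ≠ a' →
      volume {z ∈ X₀ | mf z a = mf z a' ∧ Sf z a = Sf z a'} = 0) :
    ∀ (T' : ℕ) (S : Finset (Fin (T' + 2) → A)),
      LinearIndependent ℝ (fun a : S => fun z : Fin (T' + 2) → (Fin m → ℝ) =>
        gaussianPDF (μ (a.1 0)) (Sig1 (a.1 0)) (z 0) *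
          ∏ t : Fin (T' + 1),
            gaussianPDF (mf (z t.castSucc) (a.1 t.succ)) (Sf (z t.castSucc) (a.1 t.succ))
              (z t.succ)) := by
  classical
  intro T' S
  obtain ⟨X₀, hX₀pos, hX₀⟩ := hzero
  set L : Finset A := S.biUnion (fun a => Finset.image a Finset.univ) with hL
  set P : Finset (A × A) := (L ×ˢ L).filter (fun p => p.1 ≠ p.2) with hP
  set Bad : Set (Fin m → ℝ) :=
    ⋃ p ∈ (P : Set (A × A)), {z | z ∈ X₀ ∧ mf z p.1 = mf z p.2 ∧ Sf z p.1 = Sf z p.2} with hBad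
  have hBadnull : volume Bad = 0 := by
    rw [hBad, measure_biUnion_null_iff P.countable_toSet]
    intro p hp
    have hne : p.1 ≠ p.2 := (Finset.mem_filter.mp hp).2
    exact hX₀ p.1 p.2 hne
  have hWpos : volume (X₀ \ Bad) ≠ 0 := by
    intro h0
    have hsub : X₀ ⊆ (X₀ \ Bad) ∪ Bad := by
      intro z hz
      by_cases hzB : z ∈ Bad
      · exact Or.inr hzB
      · exact Or.inl ⟨hz, hzB⟩
    have hle : volume X₀ ≤ 0 :=
      calc volume X₀ ≤ volume ((X₀ \ Bad) ∪ Bad) := measure_mono hsub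
        _ ≤ volume (X₀ \ Bad) + volume Bad := measure_union_le _ _
        _ = 0 := by rw [h0, hBadnull, add_zero]
    exact hX₀pos.ne' (le_zero_iff.mp hle)
  obtain ⟨w, hw⟩ := nonempty_of_measure_ne_zero hWpos
  have hwX : w ∈ X₀ := hw.1
  have hwB : w ∉ Bad := hw.2
  set U : Set (Fin m → ℝ) :=
    ⋂ p ∈ P, {z | ¬ (mf z p.1 = mf z p.2 ∧ Sf z p.1 = Sf z p.2)} with hU
  have hUo : IsOpen U := by
    apply isOpen_biInter_finset
    intro p _
    have hclosed : IsClosed {z | mf z p.1 = mf z p.2 ∧ Sf z p.1 = Sf z p.2} := by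
      apply IsClosed.inter
      · exact isClosed_eq (hmean_cont p.1) (hmean_cont p.2)
      · apply isClosed_eq
        · exact continuous_matrix (fun i j => hcov_cont p.1 i j)
        · exact continuous_matrix (fun i j => hcov_cont p.2 i j)
    exact hclosed.isOpen_compl
  have hwU : w ∈ U := by
    rw [hU]
    apply Set.mem_iInter₂.mpr
    intro p hp hcon
    apply hwB
    rw [hBad]
    exact Set.mem_biUnion hp ⟨hwX, hcon⟩
  have hsep : ∀ a ∈ L, ∀ a' ∈ L, ∀ z ∈ U, mf z a = mf z a' → Sf z a = Sf z a' → a = a' := by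
    intro a haL a' haL' z hzU hμe hSe
    by_contra hne
    have hpP : (a, a') ∈ P := Finset.mem_filter.mpr ⟨Finset.mem_product.mpr ⟨haL, haL'⟩, hne⟩
    have := Set.mem_iInter₂.mp hzU (a, a') hpP
    exact this ⟨hμe, hSe⟩
  rw [linearIndependent_iff']
  intro s g hg i his
  set S₀ : Finset (Fin (T' + 2) → A) := s.image Subtype.val with hS₀
  set c : (Fin (T' + 2) → A) → ℝ := fun a => ∑ j ∈ s.filter (fun j => j.1 = a), g j with hc
  have hS₀L : ∀ a ∈ S₀, ∀ t, a t ∈ L := by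
    intro a haS₀ t
    obtain ⟨j, _, rfl⟩ := Finset.mem_image.mp haS₀
    exact Finset.mem_biUnion.mpr ⟨j.1, j.2, Finset.mem_image.mpr ⟨t, Finset.mem_univ t, rfl⟩⟩
  have hsum : ∀ z, ∑ a ∈ S₀, c a * trajPDF μ Sig1 mf Sf (T' + 1) a z = 0 := by
    intro z
    have h1 : ∑ a ∈ S₀, c a * trajPDF μ Sig1 mf Sf (T' + 1) a z
        = ∑ j ∈ s, g j * trajPDF μ Sig1 mf Sf (T' + 1) j.1 z := by
      rw [← Finset.sum_fiberwise_of_maps_to (g := Subtype.val) (t := S₀)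
        (fun j hj => Finset.mem_image_of_mem Subtype.val hj)]
      apply Finset.sum_congr rfl
      intro a _
      rw [hc]
      rw [Finset.sum_mul]
      apply Finset.sum_congr rfl
      intro j hj
      rw [(Finset.mem_filter.mp hj).2]
    rw [h1]
    have h2 := congrFun hg z
    simp only [Finset.sum_apply, Pi.smul_apply, smul_eq_mul, Pi.zero_apply] at h2
    rw [← h2]
    apply Finset.sum_congr rfl
    intro j _
    rfl
  have hkey := main_zero μ Sig1 mf Sf hinit_pd htrans_pd hinit_uniq L U hUo ⟨w, hwU⟩ hsep
    (T' + 1) S₀ hS₀L c hsum i.1 (Finset.mem_image_of_mem Subtype.val his)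
  rw [hc] at hkey
  have hfilter : s.filter (fun j => j.1 = i.1) = {i} := by
    ext j
    simp only [Finset.mem_filter, Finset.mem_singleton]
    constructor
    · rintro ⟨_, hji⟩
      exact Subtype.ext hji
    · rintro rfl
      exact ⟨his, rfl⟩
  simp only [hfilter, Finset.sum_singleton] at hkey
  exact hkey
end
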